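/- The normalized matrix of maximum in-forests is idempotent: J̃² = J̃, and moreover J̃ J_k = J_k J̃ = J̃ for every k = 0, …, n−d. -/

import Mathlib

open Matrix Finset Polynomial

/-- `A` is (the arc set of) an in-forest of the weighted digraph with arc-weight
matrix `W`: all arcs are loopless arcs of positive weight, every vertex has
outdegree at most one, and there are no directed cycles. -/
def IsInForest {n : ℕ} (W : Matrix (Fin n) (Fin n) ℝ)
    (A : Finset (Fin n × Fin n)) : Prop :=
  (∀ e ∈ A, e.1 ≠ e.2 ∧ 0 < W e.1 e.2) ∧
  (∀ i : Fin n, (A.filter (fun e => e.1 = i)).card ≤ 1) ∧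
  (∀ i : Fin n, ¬ Relation.TransGen (fun a b => (a, b) ∈ A) i i)

/-- The weight of a forest: the product of its arc weights. -/
def forestWeight {n : ℕ} (W : Matrix (Fin n) (Fin n) ℝ)
    (A : Finset (Fin n × Fin n)) : ℝ :=
  ∏ e ∈ A, W e.1 e.2

/-- `i` belongs to the tree of the forest `A` converging to (rooted at) `j`. -/
def InTreeRootedAt {n : ℕ} (A : Finset (Fin n × Fin n)) (i j : Fin n) : Prop :=
  Relation.ReflTransGen (fun a b => (a, b) ∈ A) i j ∧ ∀ e ∈ A, e.1 ≠ j

open scoped Classical in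
/-- `σ_k`: the total weight of in-forests with `k` arcs. -/
noncomputable def sigmaW {n : ℕ} (W : Matrix (Fin n) (Fin n) ℝ) (k : ℕ) : ℝ :=
  ∑ A ∈ Finset.univ.powerset.filter
      (fun A => IsInForest W A ∧ A.card = k), forestWeight W A

open scoped Classical in
/-- `Q_k`: the matrix of in-forests with `k` arcs; its `(i,j)` entry is the total
weight of in-forests with `k` arcs in which `i` belongs to a tree rooted at `j`. -/
noncomputable def forestMatrix {n : ℕ} (W : Matrix (Fin n) (Fin n) ℝ) (k : ℕ) :
    Matrix (Fin n) (Fin n) ℝ :=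
  Matrix.of fun i j =>
    ∑ A ∈ Finset.univ.powerset.filter
        (fun A => IsInForest W A ∧ A.card = k ∧ InTreeRootedAt A i j),
      forestWeight W A

open scoped Classical in
/-- `σ`: the total weight of all in-forests. -/
noncomputable def sigmaTot {n : ℕ} (W : Matrix (Fin n) (Fin n) ℝ) : ℝ :=
  ∑ A ∈ Finset.univ.powerset.filter (fun A => IsInForest W A), forestWeight W A

open scoped Classical in
/-- `Q`: the matrix of all in-forests. -/
noncomputable def forestMatrixTot {n : ℕ} (W : Matrix (Fin n) (Fin n) ℝ) :
    Matrix (Fin n) (Fin n) ℝ :=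
  Matrix.of fun i j =>
    ∑ A ∈ Finset.univ.powerset.filter
        (fun A => IsInForest W A ∧ InTreeRootedAt A i j), forestWeight W A

open scoped Classical in
/-- The number of arcs in a maximum in-forest (equal to `n - d` where `d` is the
in-forest dimension). -/
noncomputable def maxForestCard {n : ℕ} (W : Matrix (Fin n) (Fin n) ℝ) : ℕ :=
  (Finset.univ.powerset.filter (fun A => IsInForest W A)).sup Finset.card

/-- The in-forest dimension `d` of the digraph. -/
noncomputable def forestDim {n : ℕ} (W : Matrix (Fin n) (Fin n) ℝ) : ℕ :=
  n - maxForestCard W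

/-- The (row) Laplacian matrix of the weighted digraph with arc-weight matrix `W`. -/
def lap {n : ℕ} (W : Matrix (Fin n) (Fin n) ℝ) : Matrix (Fin n) (Fin n) ℝ :=
  Matrix.diagonal (fun i => ∑ j, W i j) - W

/-- `J̃`: the normalized matrix of maximum in-forests. -/
noncomputable def Jtilde {n : ℕ} (W : Matrix (Fin n) (Fin n) ℝ) :
    Matrix (Fin n) (Fin n) ℝ :=
  (sigmaW W (maxForestCard W))⁻¹ • forestMatrix W (maxForestCard W)

/-!
Write `Q_k = forestMatrix W k`, `σ_k = sigmaW W k`, `L = lap W` and `m = maxForestCard W`.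
Everything rests on the recursion `Q_{k+1} + L Q_k = σ_{k+1} I` with `Q_0 = I`, which is
checked row by row. Fix a row `i`. A forest in which `i` is not a root arises exactly once by
adding an arc `i → s` to a forest in which `i` is a root and `s` does not reach `i`. In row `i`
of `L Q_k`, a vertex `s` that reaches `i` lies in the tree of `i` and contributes nothing; the
forests in which `i` is not a root contribute a sum that is antisymmetric in two attachment
vertices, hence zero; and the forests in which `i` is a root give, through the decomposition,
row `i` of `σ_{k+1} I - Q_{k+1}`.

No forest has more than `m` arcs, so `Q_{m+1} = 0` and `σ_{m+1} = 0`, whence `L Q_m = Q_m L = 0`,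
and induction along the recursion gives `Q_m Q_k = Q_k Q_m = σ_k Q_m`. Dividing by
`σ_m σ_k > 0` gives the claim.
-/

theorem Finset.sum_mul_sum_mul_sub_eq_zero {ι R : Type*} [CommRing R] (t : Finset ι)
    (c x : ι → R) : ∑ u ∈ t, c u * ∑ v ∈ t, c v * (x u - x v) = 0 := by
  simp only [Finset.mul_sum, mul_sub, Finset.sum_sub_distrib]
  rw [sub_eq_zero, Finset.sum_comm]
  exact Finset.sum_congr rfl fun _ _ => Finset.sum_congr rfl fun _ _ => by ring

theorem lap_mul_apply {n : ℕ} (W M : Matrix (Fin n) (Fin n) ℝ) (i j : Fin n) :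
    (lap W * M) i j = ∑ s, W i s * (M i j - M s j) := by
  rw [lap, Matrix.sub_mul, Matrix.sub_apply, Matrix.diagonal_mul, Matrix.mul_apply,
    Finset.sum_mul, ← Finset.sum_sub_distrib]
  exact Finset.sum_congr rfl fun _ _ => by ring

section InForest

open scoped Classical

variable {n : ℕ}

local notation:50 a " ⇝[" A "] " b:50 => Relation.ReflTransGen (fun x y => (x, y) ∈ A) a b

def IsForestRoot (A : Finset (Fin n × Fin n)) (i : Fin n) : Prop :=
  ∀ e ∈ A, e.1 ≠ i

noncomputable def forestsCard (W : Matrix (Fin n) (Fin n) ℝ) (k : ℕ) :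
    Finset (Finset (Fin n × Fin n)) :=
  Finset.univ.powerset.filter fun A => IsInForest W A ∧ A.card = k

noncomputable def attachable (W : Matrix (Fin n) (Fin n) ℝ) (F : Finset (Fin n × Fin n))
    (i : Fin n) : Finset (Fin n) :=
  Finset.univ.filter fun s => 0 < W i s ∧ ¬ s ⇝[F] i

noncomputable def treeMatrix (A : Finset (Fin n × Fin n)) : Matrix (Fin n) (Fin n) ℝ :=
  Matrix.of fun a b => if InTreeRootedAt A a b then 1 else 0

variable {W : Matrix (Fin n) (Fin n) ℝ} {A F : Finset (Fin n × Fin n)} {i j a b c s : Fin n}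

theorem mem_forestsCard {k : ℕ} : F ∈ forestsCard W k ↔ IsInForest W F ∧ F.card = k := by
  simp [forestsCard]

theorem mem_attachable : s ∈ attachable W F i ↔ 0 < W i s ∧ ¬ s ⇝[F] i := by
  simp [attachable]

theorem IsForestRoot.not_mem (hroot : IsForestRoot F i) : (i, s) ∉ F :=
  fun h => hroot _ h rfl

theorem reach_mono (h : A ⊆ F) (hab : a ⇝[A] b) : a ⇝[F] b :=
  Relation.ReflTransGen.mono (fun _ _ hxy => h hxy) _ _ hab

theorem IsForestRoot.eq_of_reach (hroot : IsForestRoot F a) (h : a ⇝[F] b) : a = b := by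
  rcases h.cases_head with h | ⟨c, hc, -⟩
  · exact h
  · exact absurd rfl (hroot _ hc)

theorem IsForestRoot.inTreeRootedAt_iff (hroot : IsForestRoot F a) :
    InTreeRootedAt F a j ↔ a = j :=
  ⟨fun h => hroot.eq_of_reach h.1, fun h => h ▸ ⟨.refl, hroot⟩⟩

theorem IsForestRoot.treeMatrix_apply (hroot : IsForestRoot F i) :
    treeMatrix F i j = (1 : Matrix (Fin n) (Fin n) ℝ) i j := by
  simp [treeMatrix, hroot.inTreeRootedAt_iff, Matrix.one_apply]

theorem isInForest_empty : IsInForest W (∅ : Finset (Fin n × Fin n)) := by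
  refine ⟨by simp, by simp, fun v hv => ?_⟩
  obtain ⟨c, hc, -⟩ := Relation.TransGen.head'_iff.mp hv
  simp at hc

theorem IsInForest.subset (hF : IsInForest W F) (h : A ⊆ F) : IsInForest W A :=
  ⟨fun e he => hF.1 e (h he),
    fun v => (Finset.card_le_card (Finset.filter_subset_filter _ h)).trans (hF.2.1 v),
    fun v hv => hF.2.2 v (Relation.TransGen.mono (fun _ _ hab => h hab) _ _ hv)⟩

theorem IsInForest.forestWeight_pos (hF : IsInForest W F) : 0 < forestWeight W F :=
  Finset.prod_pos fun e he => (hF.1 e he).2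

theorem IsInForest.eq_of_mem (hF : IsInForest W F) (hb : (a, b) ∈ F) (hc : (a, c) ∈ F) :
    b = c :=
  congrArg Prod.snd <| Finset.card_le_one.mp (hF.2.1 a) _
    (Finset.mem_filter.mpr ⟨hb, rfl⟩) _ (Finset.mem_filter.mpr ⟨hc, rfl⟩)

theorem IsInForest.not_reach_of_mem (hF : IsInForest W F) (hab : (a, b) ∈ F) : ¬ b ⇝[F] a :=
  fun h => hF.2.2 a (Relation.TransGen.head' hab h)

theorem IsInForest.reach_total (hF : IsInForest W F) (ha : s ⇝[F] a) (hb : s ⇝[F] b) :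
    a ⇝[F] b ∨ b ⇝[F] a := by
  induction ha with
  | refl => exact Or.inl hb
  | @tail c d _ hcd ih =>
    rcases ih with hcb | hbc
    · by_cases hc : c = b
      · exact Or.inr (hc ▸ .single hcd)
      · rcases hcb.cases_head with h | ⟨d', hcd', hd'b⟩
        · exact absurd h hc
        · exact Or.inl (hF.eq_of_mem hcd hcd' ▸ hd'b)
    · exact Or.inr (hbc.tail hcd)

theorem IsInForest.inTreeRootedAt_iff_of_reach (hF : IsInForest W F) (h : s ⇝[F] a) :
    InTreeRootedAt F s j ↔ InTreeRootedAt F a j := by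
  refine ⟨fun ⟨hsj, hj⟩ => ⟨?_, hj⟩, fun ⟨haj, hj⟩ => ⟨h.trans haj, hj⟩⟩
  rcases hF.reach_total h hsj with haj | hja
  · exact haj
  · exact (IsForestRoot.eq_of_reach hj hja) ▸ .refl

theorem reach_insert_iff (hs : ¬ s ⇝[F] i) :
    a ⇝[insert (i, s) F] b ↔ a ⇝[F] b ∨ (a ⇝[F] i ∧ s ⇝[F] b) := by
  refine ⟨fun h => ?_, ?_⟩
  · induction h using Relation.ReflTransGen.head_induction_on with
    | refl => exact Or.inl .refl
    | head hac _ ih =>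
      rcases Finset.mem_insert.mp hac with heq | hac
      · obtain ⟨rfl, rfl⟩ := Prod.ext_iff.mp heq
        exact ih.elim (fun h => Or.inr ⟨.refl, h⟩) (fun h => absurd h.1 hs)
      · exact ih.imp (.head hac) (And.imp_left (.head hac))
  · have hmono : F ⊆ insert (i, s) F := Finset.subset_insert _ _
    rintro (h | ⟨hai, hsb⟩)
    · exact reach_mono hmono h
    · exact (reach_mono hmono hai).trans
        (.head (Finset.mem_insert_self _ _) (reach_mono hmono hsb))

theorem reach_insert_iff_of_target (hs : ¬ s ⇝[F] i) :
    a ⇝[insert (i, s) F] i ↔ a ⇝[F] i := by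
  rw [reach_insert_iff hs]
  exact or_iff_left_of_imp And.left

theorem IsInForest.insert_of_not_reach (hF : IsInForest W F) (hs : ¬ s ⇝[F] i)
    (hroot : IsForestRoot F i) (hpos : 0 < W i s) :
    IsInForest W (insert (i, s) F) := by
  refine ⟨fun e he => ?_, fun v => ?_, fun v hv => ?_⟩
  · rcases Finset.mem_insert.mp he with rfl | he
    · exact ⟨fun h : i = s => hs (h ▸ .refl), hpos⟩
    · exact hF.1 e he
  · rw [Finset.filter_insert]
    split_ifs with hv
    · rw [Finset.filter_false_of_mem fun e he => hv ▸ hroot e he]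
      simp
    · exact hF.2.1 v
  · obtain ⟨c, hvc, hcv⟩ := Relation.TransGen.head'_iff.mp hv
    rcases Finset.mem_insert.mp hvc with heq | hvc
    · obtain ⟨rfl, rfl⟩ := Prod.ext_iff.mp heq
      exact hs ((reach_insert_iff_of_target hs).mp hcv)
    · rcases (reach_insert_iff hs).mp hcv with hcv | ⟨hci, hsv⟩
      · exact hF.not_reach_of_mem hvc hcv
      · exact hs (hsv.trans (.head hvc hci))

theorem attachable_insert (hs : ¬ s ⇝[F] i) :
    attachable W (insert (i, s) F) i = attachable W F i :=
  Finset.filter_congr fun _ _ => by rw [reach_insert_iff_of_target hs]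

theorem inTreeRootedAt_insert_of_not_reach (hs : ¬ s ⇝[F] i) (ha : ¬ a ⇝[F] i) :
    InTreeRootedAt (insert (i, s) F) a j ↔ InTreeRootedAt F a j := by
  rw [InTreeRootedAt, InTreeRootedAt, reach_insert_iff hs, or_iff_left fun h => ha h.1,
    Finset.forall_mem_insert]
  exact ⟨fun ⟨haj, _, hj⟩ => ⟨haj, hj⟩,
    fun ⟨haj, hj⟩ => ⟨haj, fun hij : i = j => ha (hij ▸ haj), hj⟩⟩

theorem IsForestRoot.inTreeRootedAt_insert_self (hroot : IsForestRoot F i)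
    (hs : ¬ s ⇝[F] i) : InTreeRootedAt (insert (i, s) F) i j ↔ InTreeRootedAt F s j := by
  rw [InTreeRootedAt, InTreeRootedAt, reach_insert_iff hs, Finset.forall_mem_insert]
  refine ⟨fun ⟨hij, hne, hj⟩ => ⟨?_, hj⟩,
    fun ⟨hsj, hj⟩ => ⟨Or.inr ⟨.refl, hsj⟩, ?_, hj⟩⟩
  · exact hij.elim (fun h => absurd (hroot.eq_of_reach h) hne) And.right
  · rintro rfl
    exact hs hsj

theorem forestWeight_insert (h : (i, s) ∉ F) :
    forestWeight W (insert (i, s) F) = W i s * forestWeight W F :=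
  Finset.prod_insert h

theorem IsForestRoot.insert_inj {F' : Finset (Fin n × Fin n)} {s' : Fin n}
    (hroot : IsForestRoot F i) (hroot' : IsForestRoot F' i)
    (h : insert (i, s) F = insert (i, s') F') : s = s' ∧ F = F' := by
  have hmem : (i, s) ∈ insert (i, s') F' := h ▸ Finset.mem_insert_self _ _
  obtain rfl : s = s' := by
    rcases Finset.mem_insert.mp hmem with h | h
    · exact (Prod.ext_iff.mp h).2
    · exact absurd h hroot'.not_mem
  refine ⟨rfl, ?_⟩
  rw [← Finset.erase_insert hroot.not_mem, h, Finset.erase_insert hroot'.not_mem]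

theorem IsInForest.isForestRoot_erase (hF : IsInForest W F) (hmem : (i, s) ∈ F) :
    IsForestRoot (F.erase (i, s)) i := fun e he hei => by
  have hei' : (i, e.2) ∈ F := hei ▸ Finset.mem_of_mem_erase he
  have : e = (i, s) := Prod.ext hei (hF.eq_of_mem hei' hmem)
  exact Finset.notMem_erase _ _ (this ▸ he)

theorem sum_forestsCard_succ_not_root {M : Type*} [AddCommMonoid M]
    (φ : Finset (Fin n × Fin n) → M) (k : ℕ) (i : Fin n) :
    ∑ G ∈ (forestsCard W (k + 1)).filter (¬ IsForestRoot · i), φ G =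
      ∑ F ∈ (forestsCard W k).filter (IsForestRoot · i),
        ∑ s ∈ attachable W F i, φ (insert (i, s) F) := by
  rw [Finset.sum_sigma']
  symm
  refine Finset.sum_bij (fun x _ => insert (i, x.2) x.1) ?_ ?_ ?_ fun _ _ => rfl
  · rintro ⟨F, s⟩ hx
    simp only [Finset.mem_sigma, Finset.mem_filter, mem_forestsCard, mem_attachable] at hx
    obtain ⟨⟨⟨hF, hcard⟩, hroot⟩, hpos, hs⟩ := hx
    simp only [Finset.mem_filter, mem_forestsCard]
    refine ⟨⟨hF.insert_of_not_reach hs hroot hpos, ?_⟩,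
      fun h => h _ (Finset.mem_insert_self _ _) rfl⟩
    rw [Finset.card_insert_of_notMem hroot.not_mem, hcard]
  · rintro ⟨F, s⟩ hx ⟨F', s'⟩ hx' heq
    simp only [Finset.mem_sigma, Finset.mem_filter] at hx hx'
    obtain ⟨rfl, rfl⟩ := IsForestRoot.insert_inj hx.1.2 hx'.1.2 heq
    rfl
  · intro G hG
    simp only [Finset.mem_filter, mem_forestsCard, IsForestRoot, not_forall, not_not] at hG
    obtain ⟨⟨hG, hcard⟩, ⟨i', s⟩, hmem, rfl⟩ := hG
    refine ⟨⟨G.erase (i', s), s⟩, ?_, Finset.insert_erase hmem⟩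
    simp only [Finset.mem_sigma, Finset.mem_filter, mem_forestsCard, mem_attachable]
    refine ⟨⟨⟨hG.subset (Finset.erase_subset _ _), ?_⟩, hG.isForestRoot_erase hmem⟩,
      (hG.1 _ hmem).2,
      fun h => hG.not_reach_of_mem hmem (reach_mono (Finset.erase_subset _ _) h)⟩
    rw [Finset.card_erase_of_mem hmem, hcard, Nat.add_sub_cancel]

theorem forestMatrix_eq_sum (W : Matrix (Fin n) (Fin n) ℝ) (k : ℕ) :
    forestMatrix W k = ∑ F ∈ forestsCard W k, forestWeight W F • treeMatrix F := by
  ext a b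
  simp only [forestMatrix, forestsCard, treeMatrix, Matrix.sum_apply, Matrix.smul_apply,
    Matrix.of_apply, smul_eq_mul, mul_ite, mul_one, mul_zero, ← Finset.sum_filter,
    Finset.filter_filter, and_assoc]

theorem sigmaW_eq_sum (W : Matrix (Fin n) (Fin n) ℝ) (k : ℕ) :
    sigmaW W k = ∑ F ∈ forestsCard W k, forestWeight W F :=
  rfl

theorem IsInForest.lap_mul_treeMatrix_apply (hW : ∀ a b, 0 ≤ W a b) (hF : IsInForest W F)
    (i j : Fin n) :
    (lap W * treeMatrix F) i j =
      ∑ s ∈ attachable W F i, W i s * (treeMatrix F i j - treeMatrix F s j) := by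
  rw [lap_mul_apply]
  refine (Finset.sum_subset (Finset.subset_univ _) fun s _ hs => ?_).symm
  rw [mem_attachable, not_and_or, not_lt, not_not] at hs
  rcases hs with hWis | hsi
  · rw [le_antisymm hWis (hW i s), zero_mul]
  · simp [treeMatrix, hF.inTreeRootedAt_iff_of_reach hsi]

theorem IsInForest.lap_mul_treeMatrix_apply_of_isForestRoot (hW : ∀ a b, 0 ≤ W a b)
    (hF : IsInForest W F) (hroot : IsForestRoot F i) (j : Fin n) :
    (lap W * treeMatrix F) i j = ∑ s ∈ attachable W F i,
      W i s * ((1 : Matrix (Fin n) (Fin n) ℝ) i j - treeMatrix (insert (i, s) F) i j) := by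
  rw [hF.lap_mul_treeMatrix_apply hW, hroot.treeMatrix_apply]
  refine Finset.sum_congr rfl fun s hs => ?_
  simp [treeMatrix, hroot.inTreeRootedAt_insert_self (mem_attachable.mp hs).2]

theorem IsInForest.sum_attachable_mul_lap_mul_treeMatrix_insert (hW : ∀ a b, 0 ≤ W a b)
    (hF : IsInForest W F) (hroot : IsForestRoot F i) (j : Fin n) :
    ∑ u ∈ attachable W F i, W i u * (lap W * treeMatrix (insert (i, u) F)) i j = 0 := by
  have hrow : ∀ u ∈ attachable W F i, (lap W * treeMatrix (insert (i, u) F)) i j =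
      ∑ s ∈ attachable W F i, W i s * (treeMatrix F u j - treeMatrix F s j) := by
    intro u hu
    obtain ⟨hpos, hu⟩ := mem_attachable.mp hu
    rw [(hF.insert_of_not_reach hu hroot hpos).lap_mul_treeMatrix_apply hW,
      attachable_insert hu]
    refine Finset.sum_congr rfl fun s hs => ?_
    simp [treeMatrix, hroot.inTreeRootedAt_insert_self hu,
      inTreeRootedAt_insert_of_not_reach hu (mem_attachable.mp hs).2]
  rw [Finset.sum_congr rfl fun u hu => by rw [hrow u hu]]
  exact Finset.sum_mul_sum_mul_sub_eq_zero _ _ _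

theorem sum_forestsCard_not_root_mul_lap_mul_treeMatrix (hW : ∀ a b, 0 ≤ W a b)
    (k : ℕ) (i j : Fin n) :
    ∑ G ∈ (forestsCard W k).filter (¬ IsForestRoot · i),
      forestWeight W G * (lap W * treeMatrix G) i j = 0 := by
  cases k with
  | zero =>
    refine Finset.sum_eq_zero fun G hG => ?_
    simp only [Finset.mem_filter, mem_forestsCard, Finset.card_eq_zero] at hG
    obtain ⟨⟨-, rfl⟩, hnot⟩ := hG
    exact absurd (fun e he => absurd he (Finset.notMem_empty e)) hnot
  | succ k =>
    rw [sum_forestsCard_succ_not_root]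
    refine Finset.sum_eq_zero fun F hF => ?_
    simp only [Finset.mem_filter, mem_forestsCard] at hF
    obtain ⟨⟨hF, -⟩, hroot⟩ := hF
    calc ∑ s ∈ attachable W F i, forestWeight W (insert (i, s) F) *
          (lap W * treeMatrix (insert (i, s) F)) i j
        = forestWeight W F * ∑ s ∈ attachable W F i,
            W i s * (lap W * treeMatrix (insert (i, s) F)) i j := by
          rw [Finset.mul_sum]
          refine Finset.sum_congr rfl fun s _ => ?_
          rw [forestWeight_insert hroot.not_mem]
          ring
      _ = 0 := by rw [hF.sum_attachable_mul_lap_mul_treeMatrix_insert hW hroot, mul_zero]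

theorem sum_forestsCard_root_mul_lap_mul_treeMatrix (hW : ∀ a b, 0 ≤ W a b)
    (k : ℕ) (i j : Fin n) :
    ∑ F ∈ (forestsCard W k).filter (IsForestRoot · i),
      forestWeight W F * (lap W * treeMatrix F) i j =
    ∑ G ∈ (forestsCard W (k + 1)).filter (¬ IsForestRoot · i),
      forestWeight W G * ((1 : Matrix (Fin n) (Fin n) ℝ) i j - treeMatrix G i j) := by
  rw [sum_forestsCard_succ_not_root]
  refine Finset.sum_congr rfl fun F hF => ?_
  simp only [Finset.mem_filter, mem_forestsCard] at hF
  obtain ⟨⟨hF, -⟩, hroot⟩ := hF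
  rw [hF.lap_mul_treeMatrix_apply_of_isForestRoot hW hroot, Finset.mul_sum]
  refine Finset.sum_congr rfl fun s _ => ?_
  rw [forestWeight_insert hroot.not_mem]
  ring

theorem forestMatrix_succ_add_lap_mul (hW : ∀ a b, 0 ≤ W a b) (k : ℕ) :
    forestMatrix W (k + 1) + lap W * forestMatrix W k = sigmaW W (k + 1) • 1 := by
  ext i j
  have hsplit := fun m (f : Finset (Fin n × Fin n) → ℝ) =>
    (Finset.sum_filter_add_sum_filter_not (forestsCard W m) (IsForestRoot · i) f).symm
  have hroot : ∑ G ∈ (forestsCard W (k + 1)).filter (IsForestRoot · i),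
      forestWeight W G * treeMatrix G i j = ∑ G ∈ (forestsCard W (k + 1)).filter
        (IsForestRoot · i), forestWeight W G * (1 : Matrix (Fin n) (Fin n) ℝ) i j :=
    Finset.sum_congr rfl fun G hG => by rw [(Finset.mem_filter.mp hG).2.treeMatrix_apply]
  simp only [Matrix.add_apply, Matrix.smul_apply, smul_eq_mul, forestMatrix_eq_sum,
    sigmaW_eq_sum, Matrix.mul_sum, Matrix.mul_smul, Matrix.sum_apply, Finset.sum_mul]
  rw [hsplit (k + 1), hsplit k, hsplit (k + 1), hroot,
    sum_forestsCard_root_mul_lap_mul_treeMatrix hW,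
    sum_forestsCard_not_root_mul_lap_mul_treeMatrix hW]
  simp only [mul_sub, Finset.sum_sub_distrib]
  ring

theorem forestsCard_zero (W : Matrix (Fin n) (Fin n) ℝ) : forestsCard W 0 = {∅} := by
  ext A
  simp only [mem_forestsCard, Finset.card_eq_zero, Finset.mem_singleton]
  refine ⟨And.right, ?_⟩
  rintro rfl
  exact ⟨isInForest_empty, rfl⟩

theorem treeMatrix_empty : treeMatrix (∅ : Finset (Fin n × Fin n)) = 1 := by
  ext a b
  exact IsForestRoot.treeMatrix_apply fun e he => absurd he (Finset.notMem_empty e)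

theorem forestMatrix_zero (W : Matrix (Fin n) (Fin n) ℝ) : forestMatrix W 0 = 1 := by
  simp [forestMatrix_eq_sum, forestsCard_zero, forestWeight, treeMatrix_empty]

theorem sigmaW_zero (W : Matrix (Fin n) (Fin n) ℝ) : sigmaW W 0 = 1 := by
  simp [sigmaW_eq_sum, forestsCard_zero, forestWeight]

theorem IsInForest.card_le_maxForestCard (hF : IsInForest W F) : F.card ≤ maxForestCard W :=
  Finset.le_sup (Finset.mem_filter.mpr ⟨Finset.mem_powerset.mpr (Finset.subset_univ _), hF⟩)

theorem forestsCard_eq_empty {k : ℕ} (hk : maxForestCard W < k) : forestsCard W k = ∅ :=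
  Finset.eq_empty_of_forall_notMem fun F hF => by
    obtain ⟨hforest, rfl⟩ := mem_forestsCard.mp hF
    exact hk.not_ge hforest.card_le_maxForestCard

theorem forestMatrix_eq_zero {k : ℕ} (hk : maxForestCard W < k) : forestMatrix W k = 0 := by
  simp [forestMatrix_eq_sum, forestsCard_eq_empty hk]

theorem sigmaW_eq_zero {k : ℕ} (hk : maxForestCard W < k) : sigmaW W k = 0 := by
  simp [sigmaW_eq_sum, forestsCard_eq_empty hk]

theorem forestsCard_nonempty {k : ℕ} (hk : k ≤ maxForestCard W) :
    (forestsCard W k).Nonempty := by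
  obtain ⟨M, hM, hmax⟩ := Finset.exists_mem_eq_sup (Finset.univ.powerset.filter (IsInForest W))
    ⟨∅, Finset.mem_filter.mpr ⟨Finset.empty_mem_powerset _, isInForest_empty⟩⟩ Finset.card
  have hkM : k ≤ M.card := by rw [← hmax]; exact hk
  obtain ⟨F, hFM, rfl⟩ := Finset.exists_subset_card_eq hkM
  exact ⟨F, mem_forestsCard.mpr ⟨(Finset.mem_filter.mp hM).2.subset hFM, rfl⟩⟩

theorem sigmaW_pos {k : ℕ} (hk : k ≤ maxForestCard W) : 0 < sigmaW W k :=
  Finset.sum_pos (fun _ hF => (mem_forestsCard.mp hF).1.forestWeight_pos)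
    (forestsCard_nonempty hk)

end InForest

section Recursion

variable {R A : Type*} [CommSemiring R] [Ring A] [Algebra R A] {L : A} {Q : ℕ → A}
  {σ : ℕ → R}

theorem commute_of_add_mul_eq_smul_one (h0 : Q 0 = 1)
    (hrec : ∀ k, Q (k + 1) + L * Q k = σ (k + 1) • 1) (k : ℕ) : Commute L (Q k) := by
  induction k with
  | zero => exact h0 ▸ Commute.one_right L
  | succ k ih =>
    rw [eq_sub_of_add_eq (hrec k)]
    exact ((Commute.one_right L).smul_right _).sub_right ((Commute.refl L).mul_right ih)

theorem mul_eq_smul_of_add_mul_eq_smul_one (h0 : Q 0 = 1) (hσ0 : σ 0 = 1)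
    (hrec : ∀ k, Q (k + 1) + L * Q k = σ (k + 1) • 1) {m : ℕ} (hQm : Q (m + 1) = 0)
    (hσm : σ (m + 1) = 0) (k : ℕ) : Q m * Q k = σ k • Q m ∧ Q k * Q m = σ k • Q m := by
  have hLQ : L * Q m = 0 := by simpa [hQm, hσm] using hrec m
  have hQL : Q m * L = 0 := (commute_of_add_mul_eq_smul_one h0 hrec m).eq ▸ hLQ
  induction k with
  | zero => simp [h0, hσ0]
  | succ k ih =>
    rw [eq_sub_of_add_eq (hrec k), mul_sub, sub_mul, mul_smul_comm, smul_mul_assoc,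
      ← mul_assoc, hQL, mul_assoc, ih.2, mul_smul_comm, hLQ]
    simp

end Recursion

theorem Jtilde_idempotent_general {n : ℕ} (W : Matrix (Fin n) (Fin n) ℝ)
    (hW : ∀ i j, 0 ≤ W i j) :
    Jtilde W * Jtilde W = Jtilde W ∧
    ∀ k : ℕ, k ≤ maxForestCard W →
      Jtilde W * ((sigmaW W k)⁻¹ • forestMatrix W k) = Jtilde W ∧
      ((sigmaW W k)⁻¹ • forestMatrix W k) * Jtilde W = Jtilde W := by
  have hmul := mul_eq_smul_of_add_mul_eq_smul_one (forestMatrix_zero W) (sigmaW_zero W)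
    (forestMatrix_succ_add_lap_mul hW)
    (forestMatrix_eq_zero (W := W) (Nat.lt_succ_self _)) (sigmaW_eq_zero (Nat.lt_succ_self _))
  have hJ : ∀ k ≤ maxForestCard W,
      Jtilde W * ((sigmaW W k)⁻¹ • forestMatrix W k) = Jtilde W ∧
      ((sigmaW W k)⁻¹ • forestMatrix W k) * Jtilde W = Jtilde W := by
    intro k hk
    have hσ := (sigmaW_pos hk).ne'
    rw [Jtilde, smul_mul_smul_comm, smul_mul_smul_comm, (hmul k).1, (hmul k).2, smul_smul,
      smul_smul]
    constructor <;> congr 1 <;> field_simp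
  exact ⟨(hJ _ le_rfl).1, hJ⟩

/-- `J̃` is idempotent and `J̃ J_k = J_k J̃ = J̃` for every `k = 0, …, n − d`. -/
theorem Jtilde_idempotent {n : ℕ} (W : Matrix (Fin n) (Fin n) ℝ)
    (hn : 1 < n) (hW : ∀ i j, 0 ≤ W i j) (hdiag : ∀ i, W i i = 0) :
    Jtilde W * Jtilde W = Jtilde W ∧
    ∀ k : ℕ, k ≤ maxForestCard W →
      Jtilde W * ((sigmaW W k)⁻¹ • forestMatrix W k) = Jtilde W ∧
      ((sigmaW W k)⁻¹ • forestMatrix W k) * Jtilde W = Jtilde W :=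
  Jtilde_idempotent_general W hW
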